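/- arXiv:2604.10155 — 4 statements merged into one kernel-verified Lean document; each statement's English description precedes it below -/
import Mathlib

section
/- With the 4×4 tables C_2, A_2, S_2^(∘p), N_2^(∘q) from the encrypted-cloning analysis and T(M) the sum of all entries, for all n ≥ 1 and 0 ≤ p ≤ n: T(C_2 ∘ A_2 ∘ S_2^(∘p) ∘ N_2^(∘(n-p))) = (1 + (-1)^(n-p)) * (i^(n-1) + i^(-(n-1))); consequently it equals 0 unless n and p are both odd, in which case it equals 4*(-1)^((n-1)/2). -/
open Complex Matrix

lemma zpow_neg_nat' (k : ℕ) : (I:ℂ) ^ (-(k:ℤ)) = (-I)^k := by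
  rw [_root_.zpow_neg, zpow_natCast, ← inv_pow, Complex.inv_I]

lemma key_id (m q : ℕ) :
    -(I^(m+2)) * 1 * 1 * ((-1:ℂ)^q) + 1 * I * ((-I)^(m+1)) +
      -((-I)^(m+2)) * 1 * 1 * ((-1:ℂ)^q) + 1 * (-I) * (I^(m+1))
    = (1 + (-1:ℂ)^q) * (I^m + (-I)^m) := by
  ring_nf
  rw [Complex.I_sq]
  ring

theorem T_branch_two (n p : ℕ) (hn : 1 ≤ n) (hp : p ≤ n) :
    let q := n - p
    let C2 : Matrix (Fin 4) (Fin 4) ℂ :=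
      !![0, 0, -(I ^ (n + 1)), 0; 0, 0, 0, 1; -(I ^ (-((n : ℤ) + 1))), 0, 0, 0; 0, 1, 0, 0]
    let A2 : Matrix (Fin 4) (Fin 4) ℂ :=
      !![0, 0, 1, 0; 0, 0, 0, I; 1, 0, 0, 0; 0, -I, 0, 0]
    let S2 : Matrix (Fin 4) (Fin 4) ℂ :=
      !![0, 0, 1, 0; 0, 0, 0, (-I) ^ p; 1, 0, 0, 0; 0, I ^ p, 0, 0]
    let N2 : Matrix (Fin 4) (Fin 4) ℂ :=
      !![0, 0, (-1) ^ q, 0; 0, 0, 0, (-I) ^ q; (-1) ^ q, 0, 0, 0; 0, I ^ q, 0, 0]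
    let T : ℂ := ∑ μ : Fin 4, ∑ ν : Fin 4, (C2.hadamard A2 |>.hadamard S2 |>.hadamard N2) μ ν
    T = (1 + (-1 : ℂ) ^ q) * (I ^ ((n : ℤ) - 1) + I ^ (-((n : ℤ) - 1))) ∧
    (¬(Odd n ∧ Odd p) → T = 0) ∧
    (Odd n → Odd p → T = 4 * (-1 : ℂ) ^ ((n - 1) / 2)) := by
  intro q C2 A2 S2 N2 T
  obtain ⟨m, rfl⟩ : ∃ m, n = m + 1 := ⟨n - 1, (Nat.succ_pred_eq_of_pos hn).symm⟩
  have hpq : p + q = m + 1 := Nat.add_sub_cancel' hp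
  have hz1 : (I:ℂ) ^ (-((((m+1:ℕ)) : ℤ) + 1)) = (-I) ^ (m + 2) := by
    have : -((((m+1:ℕ)) : ℤ) + 1) = -(((m+2:ℕ)) : ℤ) := by push_cast; ring
    rw [this, zpow_neg_nat']
  have hz2 : (I:ℂ) ^ ((((m+1:ℕ)) : ℤ) - 1) = I ^ m := by
    have : ((((m+1:ℕ)) : ℤ) - 1) = ((m:ℕ) : ℤ) := by push_cast; ring
    rw [this, zpow_natCast]
  have hz3 : (I:ℂ) ^ (-((((m+1:ℕ)) : ℤ) - 1)) = (-I) ^ m := by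
    have : -((((m+1:ℕ)) : ℤ) - 1) = -((m:ℕ) : ℤ) := by push_cast; ring
    rw [this, zpow_neg_nat']
  have hT : T = (1 + (-1:ℂ)^q) * (I^m + (-I)^m) := by
    show (∑ μ : Fin 4, ∑ ν : Fin 4, (C2.hadamard A2 |>.hadamard S2 |>.hadamard N2) μ ν) = _
    have hz1' : (I:ℂ) ^ ((-1:ℤ) + (-1 + -(m:ℤ))) = (-I) ^ (m + 2) := by
      rw [show ((-1:ℤ) + (-1 + -(m:ℤ))) = -(((m+2:ℕ)):ℤ) by push_cast; ring, zpow_neg_nat']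
    simp [C2, A2, S2, N2, Matrix.hadamard_apply, Fin.sum_univ_four, Matrix.vecHead,
      Matrix.vecTail, hz1']
    rw [mul_assoc I ((-I)^p), ← pow_add, mul_assoc I (I^p), ← pow_add, hpq]
    linear_combination key_id m q
  refine ⟨by rw [hT, hz2, hz3], ?_, ?_⟩
  · intro h
    rw [hT]
    by_cases hodd : Odd (m + 1)
    · have hep : ¬ Odd p := fun hop => h ⟨hodd, hop⟩
      have h1 : Odd (p + q) := hpq ▸ hodd
      have hq : Odd q := by
        rcases Nat.even_or_odd q with he | ho
        · exact absurd ((Nat.odd_add.mp h1).mpr he) hep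
        · exact ho
      rw [hq.neg_pow, one_pow]
      ring
    · have hm : Odd m := by
        rw [Nat.odd_iff]
        rw [Nat.not_odd_iff_even, Nat.even_iff] at hodd
        omega
      rw [hm.neg_pow]
      ring
  · intro hodd hop
    have hq : Even q := (Nat.odd_add.mp (hpq ▸ hodd)).mp hop
    have hm : Even m := Nat.not_odd_iff_even.mp (Nat.odd_add_one.mp hodd)
    obtain ⟨k, hk⟩ := hm
    have hI : (I:ℂ) ^ m = (-1) ^ k := by
      rw [hk, ← two_mul, pow_mul, Complex.I_sq]
    have hk2 : (m + 1 - 1) / 2 = k := by omega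
    rw [hT, hq.neg_pow, (Even.neg_pow ⟨k, hk⟩ I : (-I)^m = I^m), hI, hk2]
    ring
end

section
/- For n = 1, the reduced state of the single signal qubit in the encrypted-cloning protocol, defined as ρ_S = (1/8) Σ_{μ,ν=0}^{3} α_μ^(-1) α_ν ⟨ψ, σ_ν σ_μ ψ⟩ (σ_μ σ_ν), with α_0 = 1, α_1 = α_3 = i, α_2 = 1, equals (1/2)(I + y·Y), where y = ⟨ψ, Yψ⟩ is the y-Bloch component of the unit vector ψ. -/
open Complex Matrix

noncomputable def pauli : Fin 4 → Matrix (Fin 2) (Fin 2) ℂ :=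
  ![1, !![0, 1; 1, 0], !![0, -I; I, 0], !![1, 0; 0, -1]]

noncomputable def alpha1 : Fin 4 → ℂ := ![1, I, 1, I]

set_option maxHeartbeats 4000000

theorem signal_qubit_leakage (ψ : Fin 2 → ℂ)
    (hψ : ∑ a, (starRingEnd ℂ) (ψ a) * ψ a = 1) :
    let y : ℂ := ∑ a, (starRingEnd ℂ) (ψ a) * ((!![0, -I; I, 0] : Matrix (Fin 2) (Fin 2) ℂ).mulVec ψ a)
    (1 / 8 : ℂ) • ∑ μ : Fin 4, ∑ ν : Fin 4,
        ((alpha1 μ)⁻¹ * alpha1 ν *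
          (∑ a, (starRingEnd ℂ) (ψ a) * ((pauli ν * pauli μ).mulVec ψ a))) •
        (pauli μ * pauli ν)
      = (1 / 2 : ℂ) • ((1 : Matrix (Fin 2) (Fin 2) ℂ) + y • !![0, -I; I, 0]) := by
  intro y
  have h2 : (starRingEnd ℂ) (ψ 0) * ψ 0 + (starRingEnd ℂ) (ψ 1) * ψ 1 = 1 := by
    simpa [Fin.sum_univ_two] using hψ
  have hre : (ψ 0).re^2 + (ψ 0).im^2 + (ψ 1).re^2 + (ψ 1).im^2 = 1 := by
    have := congrArg Complex.re h2
    simp [Complex.mul_re] at this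
    linarith [sq_nonneg (ψ 0).re]

  have hone : (1 : Matrix (Fin 2) (Fin 2) ℂ) = !![1,0;0,1] := by
    ext i j; fin_cases i <;> fin_cases j <;> simp [Matrix.one_apply]
  simp only [pauli, alpha1, y, Fin.sum_univ_four, Fin.sum_univ_two,
    Matrix.cons_val_zero, Matrix.cons_val_one, Matrix.head_cons,
    Matrix.cons_val_two, Matrix.cons_val_three, Matrix.tail_cons, hone]
  ext i j
  fin_cases i <;> fin_cases j <;>
    simp [Matrix.mul_apply, Matrix.mulVec, dotProduct, Fin.sum_univ_two,
      Matrix.add_apply, Matrix.smul_apply, Complex.ext_iff] <;>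
    constructor <;>
    · try ring_nf
      try linear_combination (norm := ring_nf) (1/2 : ℝ) * hre
end

section
/- For n = 1, the reduced state of the single noise qubit in the encrypted-cloning protocol, defined as ρ_N = (1/8) Σ_{μ,ν=0}^{3} α_μ^(-1) α_ν ⟨ψ, σ_ν σ_μ ψ⟩ (σ_ν σ_μ)ᵀ, with α_0 = 1, α_1 = α_3 = i, α_2 = 1, equals (1/2)·I for every unit vector ψ ∈ ℂ²; in particular it is independent of ψ. -/
open Complex Matrix

set_option maxHeartbeats 2000000

theorem noise_qubit_uninformative (ψ : Fin 2 → ℂ)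
    (hψ : ∑ a, (starRingEnd ℂ) (ψ a) * ψ a = 1) :
    (1 / 8 : ℂ) • ∑ μ : Fin 4, ∑ ν : Fin 4,
        ((alpha1 μ)⁻¹ * alpha1 ν *
          (∑ a, (starRingEnd ℂ) (ψ a) * ((pauli ν * pauli μ).mulVec ψ a))) •
        (pauli ν * pauli μ)ᵀ
      = (1 / 2 : ℂ) • (1 : Matrix (Fin 2) (Fin 2) ℂ) := by
  simp only [Fin.sum_univ_two] at hψ
  ext i j
  fin_cases i <;> fin_cases j <;>
    simp [pauli, alpha1, Matrix.mul_apply, Matrix.mulVec, Matrix.one_apply,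
      Fin.sum_univ_four, Fin.sum_univ_two, dotProduct, Matrix.smul_apply,
      Matrix.transpose_apply, Matrix.vecHead, Matrix.vecTail, Matrix.cons_val',
      Matrix.cons_val_zero, Matrix.cons_val_one, Matrix.empty_val'] <;>
    ring_nf <;>
    first
      | linear_combination hψ/2
      | linear_combination (-2*(starRingEnd ℂ) (ψ 0)*ψ 1 + 2*(starRingEnd ℂ) (ψ 1)*ψ 0)*Complex.I_sq
      | linear_combination (2*(starRingEnd ℂ) (ψ 0)*ψ 1 - 2*(starRingEnd ℂ) (ψ 1)*ψ 0)*Complex.I_sq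
end

section
/- For n = 2 and with α_0 = 1, α_1 = α_2 = α_3 = i, the 4×4 matrix ρ = (1/16) Σ_{μ,ν=0}^{3} α_μ^(-1) α_ν ⟨ψ, σ_ν σ_μ ψ⟩ (σ_μ σ_ν) ⊗ (σ_μ σ_ν) equals (1/4)(I ⊗ I) for every unit vector ψ ∈ ℂ²; in particular, the reduced state of the two signal qubits is maximally mixed and independent of ψ. -/
open Complex Matrix Kronecker

noncomputable def alpha2 : Fin 4 → ℂ := ![1, I, I, I]

set_option maxHeartbeats 4000000 in
theorem two_signal_qubits_maximally_mixed (ψ : Fin 2 → ℂ)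
    (hψ : ∑ a, (starRingEnd ℂ) (ψ a) * ψ a = 1) :
    (1 / 16 : ℂ) • ∑ μ : Fin 4, ∑ ν : Fin 4,
        ((alpha2 μ)⁻¹ * alpha2 ν *
          (∑ a, (starRingEnd ℂ) (ψ a) * ((pauli ν * pauli μ).mulVec ψ a))) •
        ((pauli μ * pauli ν) ⊗ₖ (pauli μ * pauli ν))
      = (1 / 4 : ℂ) • ((1 : Matrix (Fin 2) (Fin 2) ℂ) ⊗ₖ (1 : Matrix (Fin 2) (Fin 2) ℂ)) := by
  simp only [Fin.sum_univ_two] at hψ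
  simp only [pauli, alpha2, Fin.sum_univ_four, Matrix.cons_val_zero, Matrix.cons_val_one,
    Matrix.head_cons, Matrix.cons_val_two, Matrix.tail_cons, Matrix.cons_val_three,
    Matrix.one_fin_two, Matrix.mul_fin_two]
  simp only [mulVec, dotProduct, Fin.sum_univ_two, Matrix.cons_val_zero, Matrix.cons_val_one,
    Matrix.head_cons, Matrix.cons_val', Matrix.empty_val', Matrix.cons_val_fin_one]
  ext i j
  fin_cases i <;> fin_cases j <;>
    simp [kroneckerMap_apply, Matrix.one_apply, Fin.divNat, Fin.modNat] <;>
    ring_nf <;> linear_combination ((1:ℂ)/4) * hψ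
end
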